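/- arXiv:1804.03953 — 4 statements merged into one kernel-verified Lean document; each statement's English description precedes it below -/
import Mathlib

section
/- For every ε > 0 and dimension d there is a constant k = k(ε,d) such that for every convex body P in R^d with B(0,1) ⊆ P ⊆ B(0,d), there exists a set V' of at most k points, each of the form (1+ε)·v for some extreme point v of P, with P ⊆ conv(V'). -/
/-!
Cover the ball `B(0, (1+ε)d)`, which contains `(1+ε) • ext P`, by a fixed finite number of
balls of radius `ε/4` and keep one point of `(1+ε) • ext P` in each ball that meets it: this gives
`V'` with every point of `(1+ε) • ext P` within `ε/2` of `V'`. By Krein–Milman, `(1+ε) • P` then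
lies in `conv V' + B(0, ε/2)`. Since `B(0,1) ⊆ P`, for `x ∈ P` the ball `B(x, ε)` lies in
`(1+ε) • P`, and a ball of radius `ε` inside `C + B(0, ε/2)` with `C` closed convex has its centre
in `C`: otherwise a separating functional would be larger by `ε ‖f‖` somewhere on the ball.
-/

open Set Metric Pointwise

theorem TotallyBounded.exists_card_le_net_of_subset {α : Type*} [PseudoMetricSpace α]
    {B : Set α} (hB : TotallyBounded B) {δ : ℝ} (hδ : 0 < δ) :
    ∃ N : ℕ, ∀ S ⊆ B, ∃ F : Finset α, ↑F ⊆ S ∧ F.card ≤ N ∧ ∀ s ∈ S, ∃ w ∈ F, dist s w < δ := by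
  classical
  obtain ⟨T, hT, hcov⟩ := Metric.totallyBounded_iff.1 hB (δ / 2) (half_pos hδ)
  refine ⟨hT.toFinset.card, fun S hSB => ?_⟩
  have : ∀ t, ∃ p, (S ∩ ball t (δ / 2)).Nonempty → p ∈ S ∩ ball t (δ / 2) := fun t => by
    by_cases h : (S ∩ ball t (δ / 2)).Nonempty
    exacts [⟨h.some, fun _ => h.some_mem⟩, ⟨t, fun h' => absurd h' h⟩]
  choose pick hpick using this
  set T' := hT.toFinset.filter fun t => (S ∩ ball t (δ / 2)).Nonempty
  refine ⟨T'.image pick, ?_, Finset.card_image_le.trans (Finset.card_filter_le _ _), ?_⟩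
  · intro p hp
    obtain ⟨t, ht, rfl⟩ := Finset.mem_image.1 hp
    exact (hpick t (Finset.mem_filter.1 ht).2).1
  · intro s hs
    obtain ⟨t, htT, hst⟩ := mem_iUnion₂.1 (hcov (hSB hs))
    have hne : (S ∩ ball t (δ / 2)).Nonempty := ⟨s, hs, hst⟩
    refine ⟨pick t,
      Finset.mem_image_of_mem _ (Finset.mem_filter.2 ⟨hT.mem_toFinset.2 htT, hne⟩), ?_⟩
    calc dist s (pick t) ≤ dist s t + dist (pick t) t := dist_triangle_right _ _ _
      _ < δ / 2 + δ / 2 := add_lt_add hst (hpick t hne).2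
      _ = δ := add_halves δ

section NormedSpace

variable {E : Type*} [NormedAddCommGroup E] [NormedSpace ℝ E]

theorem IsCompact.subset_of_extremePoints_subset {P K : Set E} (hPc : IsCompact P)
    (hP : Convex ℝ P) (hKc : IsClosed K) (hK : Convex ℝ K) (hPK : P.extremePoints ℝ ⊆ K) :
    P ⊆ K := by
  rw [← closure_convexHull_extremePoints hPc hP]
  exact closure_minimal (convexHull_min hPK hK) hKc

theorem closedBall_subset_smul_of_closedBall_subset {P : Set E} (hP : Convex ℝ P)
    (hball : closedBall 0 1 ⊆ P) {x : E} (hx : x ∈ P) {ε : ℝ} (hε : 0 < ε) :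
    closedBall x ε ⊆ (1 + ε) • P := by
  intro y hy
  have hb : ε⁻¹ • (y - x) ∈ P := hball <| by
    rw [mem_closedBall_zero_iff, norm_smul, norm_inv, Real.norm_of_nonneg hε.le,
      ← dist_eq_norm]
    exact inv_mul_le_one_of_le₀ hy hε.le
  refine ⟨(1 + ε)⁻¹ • x + (ε / (1 + ε)) • ε⁻¹ • (y - x),
    hP hx hb (by positivity) (by positivity) (by field_simp), ?_⟩
  have : 1 + ε ≠ 0 := by positivity
  show (1 + ε) • _ = y
  rw [smul_add, smul_smul, smul_smul, smul_smul, mul_inv_cancel₀ this,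
    mul_div_cancel₀ _ this, mul_inv_cancel₀ hε.ne', one_smul, one_smul, add_sub_cancel]

theorem mem_of_closedBall_subset_add_closedBall {C : Set E} (hC : Convex ℝ C)
    (hCc : IsClosed C) {x : E} {δ ε : ℝ} (hδ : 0 ≤ δ) (hδε : δ < ε)
    (h : closedBall x ε ⊆ C + closedBall 0 δ) : x ∈ C := by
  by_contra hx
  obtain ⟨f, t, hfC, htx⟩ := geometric_hahn_banach_closed_point hC hCc hx
  have hbound : ∀ g : E, ‖g‖ ≤ ε → f g < δ * ‖f‖ := by
    intro g hg
    obtain ⟨c, hc, b, hb, hcb⟩ :=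
      h (show x + g ∈ closedBall x ε by rwa [mem_closedBall_iff_norm, add_sub_cancel_left])
    have hfb : f b ≤ δ * ‖f‖ := calc
      f b ≤ ‖f‖ * ‖b‖ := (le_abs_self _).trans (f.le_opNorm b)
      _ ≤ δ * ‖f‖ := by rw [mul_comm]; gcongr; exact mem_closedBall_zero_iff.1 hb
    have : f x + f g = f c + f b := by rw [← map_add, ← map_add, ← hcb]
    linarith [hfC c hc]
  have hε : 0 < ε := by linarith
  have hf : 0 < ‖f‖ := by
    have := hbound 0 (by simpa using hε.le)
    rw [map_zero] at this
    exact pos_of_mul_pos_right this hδ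
  obtain ⟨g, hg, hlt⟩ := f.exists_lt_apply_of_lt_opNorm
    (show δ / ε * ‖f‖ < ‖f‖ from mul_lt_of_lt_one_left hf ((div_lt_one hε).2 hδε))
  obtain ⟨s, hs, hfs⟩ : ∃ s : E, ‖s‖ < 1 ∧ δ / ε * ‖f‖ < f s := by
    rcases lt_abs.1 hlt with h | h
    exacts [⟨g, hg, h⟩, ⟨-g, by rwa [norm_neg], by rwa [map_neg]⟩]
  have := hbound (ε • s) (by
    rw [norm_smul, Real.norm_of_nonneg hε.le]; exact mul_le_of_le_one_right hε.le hs.le)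
  rw [map_smul, smul_eq_mul] at this
  rw [div_mul_eq_mul_div, div_lt_iff₀ hε] at hfs
  linarith

theorem subset_convexHull_of_forall_extremePoints_dist_le {P : Set E} (hPc : IsCompact P)
    (hP : Convex ℝ P) (hball : closedBall 0 1 ⊆ P) {V : Finset E} {δ ε : ℝ} (hδ : 0 ≤ δ)
    (hδε : δ < ε) (hV : ∀ v ∈ P.extremePoints ℝ, ∃ w ∈ V, dist ((1 + ε) • v) w ≤ δ) :
    P ⊆ convexHull ℝ ↑V := by
  have hVc : IsCompact (convexHull ℝ (V : Set E)) := V.finite_toSet.isCompact_convexHull (𝕜 := ℝ)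
  set K := convexHull ℝ (V : Set E) + closedBall 0 δ
  have hKc : IsClosed K := isClosed_closedBall.add_left_of_isCompact hVc
  have hK : Convex ℝ K := (convex_convexHull ℝ _).add (convex_closedBall 0 δ)
  have hPK : (1 + ε) • P ⊆ K := by
    refine smul_set_subset_iff.2 (hPc.subset_of_extremePoints_subset hP
      (hKc.preimage (continuous_const_smul _)) (hK.smul_preimage (1 + ε)) fun v hv => ?_)
    obtain ⟨w, hw, hvw⟩ := hV v hv
    refine ⟨w, subset_convexHull ℝ _ hw, (1 + ε) • v - w, ?_, add_sub_cancel _ _⟩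
    rwa [mem_closedBall_zero_iff, ← dist_eq_norm]
  intro x hx
  exact mem_of_closedBall_subset_add_closedBall (convex_convexHull ℝ _) hVc.isClosed hδ hδε
    ((closedBall_subset_smul_of_closedBall_subset hP hball hx (by linarith)).trans hPK)

end NormedSpace

/-- Sparsification for normalized bodies: for every `ε > 0` and dimension `d` there is a
constant `k = k(ε,d)` such that every convex body `P` with `B(0,1) ⊆ P ⊆ B(0,d)` admits
a set `V'` of at most `k` points, each of the form `(1+ε)·v` for an extreme point `v`
of `P`, with `P ⊆ conv(V')`. -/
theorem stmt13 (d : ℕ) (ε : ℝ) (hε : 0 < ε) :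
    ∃ k : ℕ, ∀ P : Set (EuclideanSpace ℝ (Fin d)),
      Convex ℝ P → IsCompact P →
      Metric.closedBall 0 1 ⊆ P → P ⊆ Metric.closedBall 0 d →
      ∃ V' : Finset (EuclideanSpace ℝ (Fin d)), V'.card ≤ k ∧
        (∀ x ∈ V', ∃ v ∈ P.extremePoints ℝ, x = (1 + ε) • v) ∧
        P ⊆ convexHull ℝ (V' : Set (EuclideanSpace ℝ (Fin d))) := by
  obtain ⟨N, hN⟩ := (isCompact_closedBall (0 : EuclideanSpace ℝ (Fin d)) ((1 + ε) * d)
    ).totallyBounded.exists_card_le_net_of_subset (half_pos hε)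
  refine ⟨N, fun P hP hPc hball hPd => ?_⟩
  have hS : (1 + ε) • P.extremePoints ℝ ⊆ closedBall 0 ((1 + ε) * d) := by
    rintro _ ⟨v, hv, rfl⟩
    rw [mem_closedBall_zero_iff, norm_smul, Real.norm_of_nonneg (by positivity)]
    exact mul_le_mul_of_nonneg_left (mem_closedBall_zero_iff.1 (hPd (extremePoints_subset hv)))
      (by positivity)
  obtain ⟨F, hFS, hFcard, hFnet⟩ := hN _ hS
  refine ⟨F, hFcard, fun x hx => ?_, subset_convexHull_of_forall_extremePoints_dist_le hPc hP
    hball (half_pos hε).le (half_lt_self hε) fun v hv => ?_⟩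
  · obtain ⟨v, hv, rfl⟩ := hFS hx
    exact ⟨v, hv, rfl⟩
  · obtain ⟨w, hw, hvw⟩ := hFnet _ (smul_mem_smul_set hv)
    exact ⟨w, hw, hvw.le⟩
end

section
/- For every ε > 0 and dimension d there is a constant k = k(ε,d) such that for any convex polytope P ⊆ R^d there exist a point c ∈ P and a set S of at most k vertices of P with P ⊆ conv({c + (1+ε)(v − c) : v ∈ S}). -/
/-!
Fix a vertex `p` and choose vertices `q₁, …, q_d` greedily, each one farthest from the span of
the previous differences `qⱼ - p`. Then every vertex satisfies `x - p = ∑ tᵢ (qᵢ - p)` with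
`|tᵢ| ≤ 2^d`: the last coefficient is bounded because `q_d` is the farthest point from the
previous span, and subtracting its term at most doubles the distances to the earlier spans.
Cut the coefficient cube into cells of side `μ = ε / (d + 1)²` and keep one vertex per occupied
cell, together with `p` and the `qᵢ`. With `c` the barycentre of the simplex `p, q₁, …, q_d`,
a vertex `x` whose cell representative is `r` gives a point `c + (x - r) / ε` still inside the
simplex, and `x` is the expansion about `c` of a convex combination of it and `r`.
-/

open Finset

section Greedy

-- `‖Wᗮ.starProjection x‖` is the distance from `x` to the subspace `W`.
variable {X : Type*} [NormedAddCommGroup X] [InnerProductSpace ℝ X] [FiniteDimensional ℝ X]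

namespace Submodule

theorem starProjection_orthogonal_apply_eq_zero_iff {W : Submodule ℝ X} {x : X} :
    Wᗮ.starProjection x = 0 ↔ x ∈ W := by
  rw [starProjection_apply_eq_zero_iff, orthogonal_orthogonal]

theorem exists_abs_le_sub_smul_mem {W : Submodule ℝ X} {v y : X} {K : ℝ} (hK : 0 ≤ K)
    (hy : y ∈ W ⊔ ℝ ∙ v) (h : ‖Wᗮ.starProjection y‖ ≤ K * ‖Wᗮ.starProjection v‖) :
    ∃ a : ℝ, |a| ≤ K ∧ y - a • v ∈ W := by
  obtain ⟨z, hz, w, hw, rfl⟩ := mem_sup.1 hy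
  obtain ⟨a, rfl⟩ := mem_span_singleton.1 hw
  by_cases hv : v ∈ W
  · exact ⟨0, by simpa, by simpa using W.add_mem hz (W.smul_mem a hv)⟩
  refine ⟨a, ?_, by simpa using hz⟩
  rw [map_add, starProjection_orthogonal_apply_eq_zero hz, zero_add, map_smul, norm_smul,
    Real.norm_eq_abs] at h
  exact le_of_mul_le_mul_right h
    (norm_pos_iff.2 (mt starProjection_orthogonal_apply_eq_zero_iff.1 hv))

end Submodule

variable {W : ℕ → Submodule ℝ X} {u : ℕ → X}

theorem exists_coeffs_of_flag (hW0 : W 0 = ⊥) (hW : ∀ n, W (n + 1) = W n ⊔ ℝ ∙ u n)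
    (hu : ∀ i j, ‖(W i)ᗮ.starProjection (u j)‖ ≤ ‖(W i)ᗮ.starProjection (u i)‖) {n : ℕ}
    {K : ℝ} (hK : 0 ≤ K) {y : X} (hy : y ∈ W n)
    (hyu : ∀ i < n, ‖(W i)ᗮ.starProjection y‖ ≤ K * ‖(W i)ᗮ.starProjection (u i)‖) :
    ∃ t : ℕ → ℝ, y = ∑ i ∈ range n, t i • u i ∧ ∀ i < n, |t i| ≤ 2 ^ n * K := by
  induction n generalizing K y with
  | zero => exact ⟨0, by simpa [hW0] using hy, by simp⟩
  | succ n ih =>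
    obtain ⟨a, ha, hz⟩ := Submodule.exists_abs_le_sub_smul_mem hK (hW n ▸ hy) (hyu n n.lt_succ_self)
    have hzu : ∀ i < n, ‖(W i)ᗮ.starProjection (y - a • u n)‖
        ≤ 2 * K * ‖(W i)ᗮ.starProjection (u i)‖ := by
      intro i hi
      calc ‖(W i)ᗮ.starProjection (y - a • u n)‖
          ≤ ‖(W i)ᗮ.starProjection y‖ + |a| * ‖(W i)ᗮ.starProjection (u n)‖ := by
            rw [map_sub, map_smul, ← Real.norm_eq_abs, ← norm_smul]
            exact norm_sub_le _ _
        _ ≤ K * ‖(W i)ᗮ.starProjection (u i)‖ + K * ‖(W i)ᗮ.starProjection (u i)‖ := by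
            gcongr
            · exact hyu i (by omega)
            · exact hu i n
        _ = 2 * K * ‖(W i)ᗮ.starProjection (u i)‖ := by ring
    obtain ⟨t, ht, htK⟩ := ih (by positivity) hz hzu
    refine ⟨Function.update t n a, ?_, fun i hi => ?_⟩
    · rw [sum_range_succ, Function.update_self,
        sum_congr rfl fun i hi => by rw [Function.update_of_ne (mem_range.1 hi).ne], ← ht]
      abel
    · rcases eq_or_ne i n with rfl | hin
      · rw [Function.update_self]
        exact ha.trans (le_mul_of_one_le_left hK (one_le_pow₀ one_le_two))
      · rw [Function.update_of_ne hin, pow_succ, mul_assoc]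
        exact htK i (by omega)

theorem subset_flag_finrank (hW : ∀ n, W (n + 1) = W n ⊔ ℝ ∙ u n) {U : Set X}
    (hmax : ∀ n, ∀ x ∈ U, ‖(W n)ᗮ.starProjection x‖ ≤ ‖(W n)ᗮ.starProjection (u n)‖) :
    U ⊆ W (Module.finrank ℝ X) := by
  have hgrow : ∀ n, ∀ x ∈ U, x ∉ W n → n ≤ Module.finrank ℝ (W n) := by
    intro n
    induction n with
    | zero => simp
    | succ n ih =>
      intro x hx hxn
      have hle : W n ≤ W (n + 1) := hW n ▸ le_sup_left
      have hxn' : x ∉ W n := fun h => hxn (hle h)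
      have hun : u n ∉ W n := by
        intro h
        apply hxn'
        rw [← Submodule.starProjection_orthogonal_apply_eq_zero_iff, ← norm_le_zero_iff]
        simpa [Submodule.starProjection_orthogonal_apply_eq_zero h] using hmax n x hx
      have hun' : u n ∈ W (n + 1) :=
        hW n ▸ Submodule.mem_sup_right (Submodule.mem_span_singleton_self _)
      have := Submodule.finrank_lt_finrank_of_lt
        (SetLike.lt_iff_le_and_exists.2 ⟨hle, u n, hun', hun⟩)
      have := ih x hx hxn'
      omega
  intro x hx
  by_contra hxW
  have htop : W (Module.finrank ℝ X) = ⊤ :=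
    Submodule.eq_top_of_finrank_eq ((Submodule.finrank_le _).antisymm (hgrow _ x hx hxW))
  exact hxW (htop ▸ Submodule.mem_top)

theorem exists_bounded_coeffs {ι : Type*} {s : Finset ι} (hs : s.Nonempty) (f : ι → X) {n : ℕ}
    (hn : Module.finrank ℝ X ≤ n) :
    ∃ e : Fin n → ι, (∀ i, e i ∈ s) ∧
      ∀ x ∈ s, ∃ t : Fin n → ℝ, f x = ∑ i, t i • f (e i) ∧ ∀ i, |t i| ≤ 2 ^ n := by
  choose g hgs hgmax using fun W : Submodule ℝ X =>
    s.exists_max_image (fun x => ‖Wᗮ.starProjection (f x)‖) hs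
  let W : ℕ → Submodule ℝ X := fun k => Nat.rec ⊥ (fun _ V => V ⊔ ℝ ∙ f (g V)) k
  have hW : ∀ k, W (k + 1) = W k ⊔ ℝ ∙ f (g (W k)) := fun _ => rfl
  have hsat := subset_flag_finrank hW (U := f '' s) (by
    rintro k _ ⟨x, hx, rfl⟩
    exact hgmax _ x hx)
  have hmono : Monotone W := monotone_nat_of_le_succ fun k => hW k ▸ le_sup_left
  refine ⟨fun i => g (W i), fun i => hgs _, fun x hx => ?_⟩
  obtain ⟨t, ht, htb⟩ := exists_coeffs_of_flag rfl hW (fun i j => hgmax _ _ (hgs _))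
    zero_le_one (hmono hn (hsat ⟨x, hx, rfl⟩)) (fun i _ => by
      rw [one_mul]
      exact hgmax _ x hx)
  refine ⟨fun i => t i, ?_, fun i => by simpa using htb i i.2⟩
  rw [Fin.sum_univ_eq_sum_range (fun i => t i • f (g (W i)))]
  exact ht

end Greedy

theorem Finset.exists_subset_card_le_forall_abs_sub_lt {α : Type*} {n : ℕ}
    {M μ : ℝ} (hμ : 0 < μ) (V : Finset α) (t : α → Fin n → ℝ)
    (ht : ∀ x ∈ V, ∀ i, |t x i| ≤ M) :
    ∃ R ⊆ V, R.card ≤ (2 * ⌈M / μ⌉₊ + 1) ^ n ∧ ∀ x ∈ V, ∃ r ∈ R, ∀ i, |t x i - t r i| < μ := by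
  set B : ℤ := (⌈M / μ⌉₊ : ℤ)
  let cell : α → Fin n → ℤ := fun x i => ⌊t x i / μ⌋
  obtain ⟨R, hRV, hinj, hR⟩ := exists_subset_injOn_image_eq_of_surjOn (V : Set α) (V.image cell)
    (by rw [coe_image]; exact Set.surjOn_image _ _)
  have hgrid : V.image cell ⊆ Fintype.piFinset fun _ => Icc (-B) B := by
    simp only [subset_iff, mem_image, Fintype.mem_piFinset, mem_Icc]
    rintro _ ⟨x, hx, rfl⟩ i
    have hxi : |t x i / μ| ≤ ⌈M / μ⌉₊ := by
      rw [abs_div, abs_of_pos hμ]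
      exact (div_le_div_of_nonneg_right (ht x hx i) hμ.le).trans (Nat.le_ceil _)
    obtain ⟨hlo, hhi⟩ := abs_le.1 hxi
    exact ⟨Int.le_floor.2 (by push_cast [B]; exact hlo),
      (Int.floor_le_floor hhi).trans (Int.floor_natCast _).le⟩
  refine ⟨R, coe_subset.1 hRV, ?_, fun x hx => ?_⟩
  · calc R.card = (V.image cell).card := by rw [← hR, card_image_of_injOn hinj]
      _ ≤ _ := card_le_card hgrid
      _ = _ := by
        simp only [Fintype.card_piFinset, Int.card_Icc, prod_const, card_univ, Fintype.card_fin]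
        congr 1
        omega
  · obtain ⟨r, hr, hrx⟩ := mem_image.1 (hR ▸ mem_image_of_mem cell hx)
    refine ⟨r, hr, fun i => ?_⟩
    have := Int.abs_sub_lt_one_of_floor_eq_floor (congrFun hrx i).symm
    rwa [← sub_div, abs_div, abs_of_pos hμ, div_lt_one hμ] at this

section Convex

variable {X : Type*} [AddCommGroup X] [Module ℝ X]

theorem add_sum_smul_sub_mem_convexHull {ι : Type*} [Fintype ι] (p : X) (q : ι → X)
    {b : ι → ℝ} (hb : ∀ i, 0 ≤ b i) (hb1 : ∑ i, b i ≤ 1) :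
    p + ∑ i, b i • (q i - p) ∈ convexHull ℝ (insert p (Set.range q)) := by
  have hcomb : p + ∑ i, b i • (q i - p)
      = ∑ j : Option ι, j.elim (1 - ∑ i, b i) b • j.elim p q := by
    simp only [Fintype.sum_option, Option.elim_none, Option.elim_some, smul_sub, sum_sub_distrib,
      sub_smul, sum_smul, one_smul]
    abel
  rw [hcomb]
  refine (convex_convexHull ℝ _).sum_mem ?_ (by simp [Fintype.sum_option]) ?_
  · rintro (_ | i) _
    exacts [sub_nonneg.2 hb1, hb i]
  · rintro (_ | i) _ <;> apply subset_convexHull <;> simp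

theorem add_sum_smul_sub_mem_convexHull_of_abs_le {n : ℕ} (p : X) (q : Fin n → X)
    {a : Fin n → ℝ} (ha : ∀ i, |a i| ≤ ((n + 1) ^ 2 : ℝ)⁻¹) :
    p + ∑ i, ((n + 1 : ℝ)⁻¹ + a i) • (q i - p) ∈ convexHull ℝ (insert p (Set.range q)) := by
  have hn : (0 : ℝ) < n + 1 := by positivity
  have hsq : ((n + 1) ^ 2 : ℝ)⁻¹ ≤ (n + 1 : ℝ)⁻¹ :=
    inv_anti₀ hn (by nlinarith)
  refine add_sum_smul_sub_mem_convexHull p q (fun i => ?_) ?_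
  · linarith [neg_abs_le (a i), ha i]
  · calc ∑ i, ((n + 1 : ℝ)⁻¹ + a i) ≤ ∑ _i : Fin n, ((n + 1 : ℝ)⁻¹ + ((n + 1) ^ 2 : ℝ)⁻¹) :=
          sum_le_sum fun i _ => by linarith [le_abs_self (a i), ha i]
      _ ≤ 1 := by
          rw [sum_const, card_univ, Fintype.card_fin, nsmul_eq_mul]
          field_simp
          nlinarith

theorem mem_convexHull_image_homothety {S : Set X} {c s x : X} {ε : ℝ} (hε : 0 < ε) (hs : s ∈ S)
    (hz : c + ε⁻¹ • (x - s) ∈ convexHull ℝ S) :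
    x ∈ convexHull ℝ ((fun v => c + (1 + ε) • (v - c)) '' S) := by
  have hf : (fun v => c + (1 + ε) • (v - c)) = AffineMap.homothety c (1 + ε) := by
    ext v
    rw [AffineMap.homothety_apply, vsub_eq_sub, vadd_eq_add, add_comm]
  rw [hf, ← AffineMap.image_convexHull]
  refine ⟨(1 + ε)⁻¹ • s + (ε / (1 + ε)) • (c + ε⁻¹ • (x - s)),
    (convex_convexHull ℝ S) (subset_convexHull ℝ S hs) hz (by positivity) (by positivity)
      (by field_simp), ?_⟩
  rw [← hf]
  match_scalars <;> field_simp <;> ring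

theorem exists_sparse_cover_of_bounded_coords {n : ℕ} {M ε : ℝ} (hε : 0 < ε) {V : Finset X}
    {p : X} {q : Fin n → X} (hp : p ∈ V) (hq : ∀ i, q i ∈ V)
    (hV : ∀ x ∈ V, ∃ t : Fin n → ℝ, x - p = ∑ i, t i • (q i - p) ∧ ∀ i, |t i| ≤ M) :
    ∃ c ∈ convexHull ℝ (V : Set X), ∃ S ⊆ V,
      S.card ≤ (2 * ⌈M * (n + 1) ^ 2 / ε⌉₊ + 1) ^ n + n + 1 ∧
      (V : Set X) ⊆ convexHull ℝ ((fun v => c + (1 + ε) • (v - c)) '' S) := by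
  classical
  choose! t ht htM using hV
  obtain ⟨R, hRV, hRcard, hR⟩ := exists_subset_card_le_forall_abs_sub_lt
    (μ := ε / (n + 1) ^ 2) (by positivity) V t htM
  set S := insert p (univ.image q ∪ R)
  have hsimplex : ∀ a : Fin n → ℝ, (∀ i, |a i| ≤ ((n + 1) ^ 2 : ℝ)⁻¹) →
      p + ∑ i, ((n + 1 : ℝ)⁻¹ + a i) • (q i - p) ∈ convexHull ℝ (S : Set X) := by
    refine fun a ha => convexHull_mono ?_ (add_sum_smul_sub_mem_convexHull_of_abs_le p q ha)
    simp only [S, coe_insert, coe_union, coe_image, coe_univ, Set.image_univ]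
    exact Set.insert_subset_insert Set.subset_union_left
  have hSV : S ⊆ V := insert_subset hp (union_subset (image_subset_iff.2 fun i _ => hq i) hRV)
  set c := p + ∑ i, (n + 1 : ℝ)⁻¹ • (q i - p)
  have hc : c ∈ convexHull ℝ (S : Set X) := by
    simpa using hsimplex 0 fun _ => by rw [Pi.zero_apply, abs_zero]; positivity
  refine ⟨c, convexHull_mono hSV hc, S, hSV, ?_, fun x hx => ?_⟩
  · calc S.card ≤ (univ.image q).card + R.card + 1 :=
          (card_insert_le _ _).trans (by gcongr; exact card_union_le _ _)
      _ ≤ n + (2 * ⌈M * (n + 1) ^ 2 / ε⌉₊ + 1) ^ n + 1 := by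
          rw [div_div_eq_mul_div] at hRcard
          gcongr
          exact card_image_le.trans (by simp)
      _ = _ := by ring
  obtain ⟨r, hr, hxr⟩ := hR x hx
  refine mem_convexHull_image_homothety hε (s := r) (by simp [S, hr]) ?_
  convert hsimplex (fun i => (t x i - t r i) / ε) (fun i => ?_) using 1
  · have hxr : x - r = ∑ i, (t x i - t r i) • (q i - p) := by
      rw [← sub_sub_sub_cancel_right x r p, ht x hx, ht r (hRV hr), ← sum_sub_distrib]
      simp only [sub_smul]
    simp only [c, hxr, smul_sum, add_smul, sum_add_distrib, smul_smul, add_assoc]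
    congr 2
    exact sum_congr rfl fun i _ => by rw [div_eq_inv_mul]
  · rw [abs_div, abs_of_pos hε, div_le_iff₀ hε]
    calc |t x i - t r i| ≤ ε / (n + 1) ^ 2 := (hxr i).le
      _ = ((n + 1) ^ 2 : ℝ)⁻¹ * ε := by ring

end Convex

theorem Set.Finite.convexHull_extremePoints_convexHull {E : Type*} [NormedAddCommGroup E]
    [NormedSpace ℝ E] {A : Set E} (hA : A.Finite) :
    convexHull ℝ ((convexHull ℝ A).extremePoints ℝ) = convexHull ℝ A := by
  have hfin : ((convexHull ℝ A).extremePoints ℝ).Finite :=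
    hA.subset extremePoints_convexHull_subset
  rw [← (hfin.isClosed_convexHull ℝ).closure_eq]
  exact closure_convexHull_extremePoints (hA.isCompact_convexHull (𝕜 := ℝ)) (convex_convexHull ℝ A)

/-- Sparsification theorem: for every `ε > 0` and dimension `d` there is a constant
`k = k(ε,d)` such that every convex polytope `P ⊆ ℝ^d` has a center point `c ∈ P` and a
set `S` of at most `k` of its vertices with `P` contained in the convex hull of the
expansion of `S` about `c` by factor `1+ε`. -/
theorem stmt14 (d : ℕ) (ε : ℝ) (hε : 0 < ε) :
    ∃ k : ℕ, ∀ V : Finset (EuclideanSpace ℝ (Fin d)), V.Nonempty →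
      ∀ P : Set (EuclideanSpace ℝ (Fin d)),
        P = convexHull ℝ (V : Set (EuclideanSpace ℝ (Fin d))) →
        ∃ c ∈ P, ∃ S : Finset (EuclideanSpace ℝ (Fin d)),
          (S : Set (EuclideanSpace ℝ (Fin d))) ⊆ P.extremePoints ℝ ∧ S.card ≤ k ∧
          P ⊆ convexHull ℝ
            ((fun v => c + (1 + ε) • (v - c)) '' (S : Set (EuclideanSpace ℝ (Fin d)))) := by
  refine ⟨(2 * ⌈2 ^ d * (d + 1) ^ 2 / ε⌉₊ + 1) ^ d + d + 1, ?_⟩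
  rintro V hV _ rfl
  obtain ⟨E, hE⟩ : ∃ E : Finset (EuclideanSpace ℝ (Fin d)),
      (E : Set (EuclideanSpace ℝ (Fin d))) = (convexHull ℝ (V : Set _)).extremePoints ℝ :=
    ⟨_, (V.finite_toSet.subset extremePoints_convexHull_subset).coe_toFinset⟩
  have hEV : convexHull ℝ (E : Set (EuclideanSpace ℝ (Fin d))) = convexHull ℝ ↑V := by
    rw [hE, V.finite_toSet.convexHull_extremePoints_convexHull]
  obtain ⟨p, hp⟩ : E.Nonempty := by
    rw [← coe_nonempty, ← convexHull_nonempty_iff (𝕜 := ℝ), hEV, convexHull_nonempty_iff]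
    exact coe_nonempty.2 hV
  obtain ⟨q, hqE, hcoords⟩ := exists_bounded_coeffs ⟨p, hp⟩ (· - p) finrank_euclideanSpace_fin.le
  obtain ⟨c, hc, S, hSE, hcard, hcover⟩ :=
    exists_sparse_cover_of_bounded_coords hε hp hqE hcoords
  refine ⟨c, hEV ▸ hc, S, hE ▸ coe_subset.2 hSE, hcard, ?_⟩
  rw [← hEV]
  exact convexHull_min hcover (convex_convexHull ℝ _)
end

section
/- Let P be a convex polytope in R^d with m vertices, and for each vertex v of P let C_v be an axis-parallel hypercube of side length g containing v, with P'' = conv(⋃_v vertices(C_v)). Then the length of a shortest closed tour of the vertices of P'' is at most the length of a shortest closed tour of the vertices of P plus m·g·√d·(2^d + 1). -/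
/-- The length of the closed polygonal tour through `t 0, t 1, …, t (k-1)` in cyclic
order. -/
noncomputable def tourLength {d k : ℕ} (t : Fin k → EuclideanSpace ℝ (Fin d)) : ℝ :=
  ∑ i, dist (t i) (t (finRotate k i))

/-- The set of lengths of closed polygonal tours visiting all points of `X`. -/
def tourLengths {d : ℕ} (X : Set (EuclideanSpace ℝ (Fin d))) : Set ℝ :=
  {L | ∃ (k : ℕ) (t : Fin k → EuclideanSpace ℝ (Fin d)),
    X ⊆ Set.range t ∧ tourLength t = L}

/-- The set of the `2^d` corners of the axis-parallel hypercube with lower corner `x`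
and side length `g`. -/
def cubeCorners {d : ℕ} (x : EuclideanSpace ℝ (Fin d)) (g : ℝ) :
    Set (EuclideanSpace ℝ (Fin d)) :=
  {y | ∀ i, y i = x i ∨ y i = x i + g}

/-- Membership in the axis-parallel hypercube with lower corner `x` and side length
`g`. -/
def inCube {d : ℕ} (x v : EuclideanSpace ℝ (Fin d)) (g : ℝ) : Prop :=
  ∀ i, x i ≤ v i ∧ v i ≤ x i + g

/-!
Splice into a tour of the vertices of `P`, at each vertex `v`, a closed loop that starts at `v`,
visits the `2^d` corners of `C_v` and returns to `v`. Splicing two closed tours at a common point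
adds their lengths, and each of the `2^d + 1` edges of such a loop joins two points of `C_v`, so
it is no longer than the diameter `g√d`. The resulting tour visits every cube corner, hence every
vertex of `P''`, since the extreme points of a convex hull lie in the generating set.
-/

section

variable {α : Type*} [PseudoMetricSpace α]

noncomputable def pathLength {k : ℕ} (t : Fin (k + 1) → α) : ℝ :=
  ∑ i : Fin k, dist (t i.castSucc) (t i.succ)

lemma pathLength_append {m n : ℕ} (t : Fin (m + 1) → α) (c : Fin (n + 1) → α) :
    pathLength (k := m + 1 + n) (Fin.append t c :) =
      pathLength t + dist (t (Fin.last m)) (c 0) + pathLength c := by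
  rw [pathLength, Fin.sum_univ_add, Fin.sum_univ_castSucc]
  have hsucc : ∀ i : Fin m, (Fin.castAdd n i.castSucc).succ = Fin.castAdd (n + 1) i.succ :=
    fun _ => rfl
  have hsucc_last : (Fin.castAdd n (Fin.last m)).succ = Fin.natAdd (m + 1) (0 : Fin (n + 1)) :=
    rfl
  simp only [Fin.castSucc_castAdd, Fin.castSucc_natAdd, Fin.succ_natAdd, hsucc, hsucc_last,
    Fin.append_left, Fin.append_right, pathLength]

end

section

variable {d : ℕ}

lemma tourLength_eq_pathLength_add {k : ℕ} (t : Fin (k + 1) → EuclideanSpace ℝ (Fin d)) :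
    tourLength t = pathLength t + dist (t (Fin.last k)) (t 0) := by
  simp [tourLength, pathLength, Fin.sum_univ_castSucc, Fin.coeSucc_eq_succ]

lemma tourLength_append_of_head_eq {m n : ℕ} (t : Fin (m + 1) → EuclideanSpace ℝ (Fin d))
    (c : Fin (n + 1) → EuclideanSpace ℝ (Fin d)) (h : t 0 = c 0) :
    tourLength (Fin.append t c) = tourLength t + tourLength c := by
  rw [tourLength_eq_pathLength_add (k := m + 1 + n), pathLength_append,
    tourLength_eq_pathLength_add, tourLength_eq_pathLength_add, h]
  have hlast : Fin.append t c (Fin.last (m + 1 + n)) = c (Fin.last n) :=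
    Fin.append_right t c (Fin.last n)
  have hzero : Fin.append t c 0 = t 0 := Fin.append_left t c 0
  rw [hlast, hzero, h]
  ring

lemma tourLength_comp_add_right {k : ℕ} (t : Fin (k + 1) → EuclideanSpace ℝ (Fin d))
    (j : Fin (k + 1)) : tourLength (fun i => t (i + j)) = tourLength t := by
  simp only [tourLength, finRotate_apply]
  exact Fintype.sum_equiv (Equiv.addRight j) _ _ fun i => by simp [add_right_comm]

lemma tourLength_nonneg {k : ℕ} (t : Fin k → EuclideanSpace ℝ (Fin d)) : 0 ≤ tourLength t :=
  Finset.sum_nonneg fun _ _ => dist_nonneg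

lemma tourLength_le_mul {k : ℕ} {t : Fin k → EuclideanSpace ℝ (Fin d)} {B : ℝ}
    (h : ∀ i j, dist (t i) (t j) ≤ B) : tourLength t ≤ k * B := by
  calc tourLength t ≤ ∑ _i : Fin k, B := Finset.sum_le_sum fun i _ => h i (finRotate k i)
    _ = k * B := by simp

lemma tourLengths_anti {X Y : Set (EuclideanSpace ℝ (Fin d))} (h : X ⊆ Y) :
    tourLengths Y ⊆ tourLengths X := fun _ ⟨k, t, hY, hL⟩ => ⟨k, t, h.trans hY, hL⟩

lemma bddBelow_tourLengths (X : Set (EuclideanSpace ℝ (Fin d))) : BddBelow (tourLengths X) :=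
  ⟨0, fun _ ⟨_, t, _, hL⟩ => hL ▸ tourLength_nonneg t⟩

lemma Set.Finite.tourLengths_nonempty {X : Set (EuclideanSpace ℝ (Fin d))} (hX : X.Finite) :
    (tourLengths X).Nonempty := by
  obtain ⟨k, f, hf⟩ := hX.fin_embedding
  exact ⟨_, k, f, hf.ge, rfl⟩

lemma add_tourLength_mem_tourLengths_union {X : Set (EuclideanSpace ℝ (Fin d))} {L : ℝ}
    (hL : L ∈ tourLengths X) {n : ℕ} (c : Fin (n + 1) → EuclideanSpace ℝ (Fin d))
    (hc : c 0 ∈ X) : L + tourLength c ∈ tourLengths (X ∪ Set.range c) := by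
  obtain ⟨k, t, hX, rfl⟩ := hL
  obtain ⟨j, hj⟩ := hX hc
  cases k with
  | zero => exact j.elim0
  | succ k =>
    refine ⟨_, Fin.append (fun i => t (i + j)) c, ?_, ?_⟩
    · rintro x (hx | ⟨i, rfl⟩)
      · obtain ⟨i, rfl⟩ := hX hx
        exact ⟨Fin.castAdd (n + 1) (i - j), by simp⟩
      · exact ⟨Fin.natAdd (k + 1) i, Fin.append_right _ _ _⟩
    · rw [tourLength_append_of_head_eq _ _ (by simpa using hj), tourLength_comp_add_right]

def cubeCorner (x : EuclideanSpace ℝ (Fin d)) (g : ℝ) (b : Fin d → Bool) :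
    EuclideanSpace ℝ (Fin d) :=
  WithLp.toLp 2 fun i => if b i then x i + g else x i

lemma inCube_cubeCorner (x : EuclideanSpace ℝ (Fin d)) {g : ℝ} (hg : 0 ≤ g)
    (b : Fin d → Bool) : inCube x (cubeCorner x g b) g := by
  intro i
  by_cases hb : b i <;> simp [cubeCorner, hb, hg]

lemma cubeCorners_subset_range_cubeCorner (x : EuclideanSpace ℝ (Fin d)) (g : ℝ) :
    cubeCorners x g ⊆ Set.range (cubeCorner x g) := by
  intro y hy
  refine ⟨fun i => decide (y i ≠ x i), PiLp.ext fun i => ?_⟩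
  rcases hy i with h | h <;> by_cases hx : y i = x i <;> simp_all [cubeCorner]

lemma dist_le_of_inCube {x p q : EuclideanSpace ℝ (Fin d)} {g : ℝ} (hg : 0 ≤ g)
    (hp : inCube x p g) (hq : inCube x q g) : dist p q ≤ g * √d := by
  have hcoord : ∀ i, dist (p i) (q i) ^ 2 ≤ g ^ 2 := fun i => by
    obtain ⟨hp₁, hp₂⟩ := hp i
    obtain ⟨hq₁, hq₂⟩ := hq i
    rw [Real.dist_eq, sq_abs]
    nlinarith
  calc dist p q = √(∑ i, dist (p i) (q i) ^ 2) := EuclideanSpace.dist_eq p q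
    _ ≤ √(∑ _i : Fin d, g ^ 2) := Real.sqrt_le_sqrt (Finset.sum_le_sum fun i _ => hcoord i)
    _ = g * √d := by simp [Real.sqrt_sq hg, mul_comm]

lemma exists_loop_through_cubeCorners {x v : EuclideanSpace ℝ (Fin d)} {g : ℝ} (hg : 0 ≤ g)
    (hv : inCube x v g) :
    ∃ (n : ℕ) (c : Fin (n + 1) → EuclideanSpace ℝ (Fin d)),
      c 0 = v ∧ cubeCorners x g ⊆ Set.range c ∧
        tourLength c ≤ (2 ^ d + 1) * (g * √d) := by
  let e := Fintype.equivFin (Fin d → Bool)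
  let c : Fin (Fintype.card (Fin d → Bool) + 1) → EuclideanSpace ℝ (Fin d) :=
    Fin.cons v (cubeCorner x g ∘ e.symm)
  have hc : ∀ i, inCube x (c i) g := Fin.cases hv fun i => inCube_cubeCorner x hg _
  refine ⟨_, c, rfl, ?_, ?_⟩
  · intro y hy
    obtain ⟨b, rfl⟩ := cubeCorners_subset_range_cubeCorner x g hy
    exact ⟨(e b).succ, by simp [c]⟩
  · refine (tourLength_le_mul fun i j => dist_le_of_inCube hg (hc i) (hc j)).trans_eq ?_
    simp

lemma exists_tourLength_le_union_cubeCorners {X : Set (EuclideanSpace ℝ (Fin d))} {L : ℝ}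
    (hL : L ∈ tourLengths X) {x v : EuclideanSpace ℝ (Fin d)} (hvX : v ∈ X) {g : ℝ}
    (hg : 0 ≤ g) (hv : inCube x v g) :
    ∃ L' ∈ tourLengths (X ∪ cubeCorners x g), L' ≤ L + (2 ^ d + 1) * (g * √d) := by
  obtain ⟨n, c, rfl, hcorners, hc⟩ := exists_loop_through_cubeCorners hg hv
  exact ⟨_, tourLengths_anti (Set.union_subset_union_right X hcorners)
    (add_tourLength_mem_tourLengths_union hL c hvX), by linarith⟩

lemma exists_tourLength_le_union_biUnion_cubeCorners {X : Set (EuclideanSpace ℝ (Fin d))}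
    {L : ℝ} (hL : L ∈ tourLengths X) {g : ℝ} (hg : 0 ≤ g)
    (a : EuclideanSpace ℝ (Fin d) → EuclideanSpace ℝ (Fin d))
    (F : Finset (EuclideanSpace ℝ (Fin d)))
    (hFX : ↑F ⊆ X) (ha : ∀ v ∈ F, inCube (a v) v g) :
    ∃ L' ∈ tourLengths (X ∪ ⋃ v ∈ F, cubeCorners (a v) g),
      L' ≤ L + F.card * ((2 ^ d + 1) * (g * √d)) := by
  classical
  induction F using Finset.induction_on with
  | empty => exact ⟨L, by simpa using hL, by simp⟩
  | @insert v F hvF ih =>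
    obtain ⟨L₁, hL₁, hle₁⟩ := ih (fun w hw => hFX (Finset.mem_insert_of_mem hw))
      fun w hw => ha w (Finset.mem_insert_of_mem hw)
    obtain ⟨L₂, hL₂, hle₂⟩ := exists_tourLength_le_union_cubeCorners hL₁
      (Or.inl (hFX (Finset.mem_insert_self v F))) hg (ha v (Finset.mem_insert_self v F))
    refine ⟨L₂, ?_, ?_⟩
    · rwa [Finset.set_biUnion_insert, Set.union_left_comm, Set.union_comm]
    · rw [Finset.card_insert_of_notMem hvF]
      push_cast
      linarith

end

lemma csInf_le_csInf_add {α : Type*} [ConditionallyCompleteLinearOrder α] [AddCommGroup α]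
    [IsOrderedAddMonoid α] {A B : Set α} (hA : BddBelow A) (hB : B.Nonempty) {C : α}
    (h : ∀ b ∈ B, ∃ a ∈ A, a ≤ b + C) : sInf A ≤ sInf B + C := by
  rw [← sub_le_iff_le_add]
  refine le_csInf hB fun b hb => ?_
  obtain ⟨a, ha, hab⟩ := h b hb
  exact sub_le_iff_le_add.2 ((csInf_le hA ha).trans hab)

/-- If `P` is a convex polytope with `m` vertices, each vertex `v` lies in an
axis-parallel hypercube `C_v` of side length `g`, and `P''` is the convex hull of the
corners of all these hypercubes, then the shortest closed tour of the vertices of `P''`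
is at most the shortest closed tour of the vertices of `P` plus `m·g·√d·(2^d + 1)`. -/
theorem stmt16 {d : ℕ} (V : Finset (EuclideanSpace ℝ (Fin d)))
    (P : Set (EuclideanSpace ℝ (Fin d)))
    (hP : P = convexHull ℝ (V : Set (EuclideanSpace ℝ (Fin d))))
    (m : ℕ) (hm : (P.extremePoints ℝ).ncard = m)
    (g : ℝ) (hg : 0 ≤ g) (a : EuclideanSpace ℝ (Fin d) → EuclideanSpace ℝ (Fin d))
    (ha : ∀ v ∈ P.extremePoints ℝ, inCube (a v) v g)
    (P'' : Set (EuclideanSpace ℝ (Fin d)))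
    (hP'' : P'' = convexHull ℝ (⋃ v ∈ P.extremePoints ℝ, cubeCorners (a v) g)) :
    sInf (tourLengths (P''.extremePoints ℝ)) ≤
      sInf (tourLengths (P.extremePoints ℝ)) + m * g * Real.sqrt d * (2 ^ d + 1) := by
  subst hP
  set S := (convexHull ℝ (V : Set (EuclideanSpace ℝ (Fin d)))).extremePoints ℝ
  have hS : S.Finite := V.finite_toSet.subset extremePoints_convexHull_subset
  have hP''S : P''.extremePoints ℝ ⊆ S ∪ ⋃ v ∈ hS.toFinset, cubeCorners (a v) g := by
    rw [hP'']
    simpa using extremePoints_convexHull_subset.trans Set.subset_union_right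
  refine csInf_le_csInf_add (bddBelow_tourLengths _) hS.tourLengths_nonempty fun L hL => ?_
  obtain ⟨L', hL', hle⟩ := exists_tourLength_le_union_biUnion_cubeCorners hL hg a hS.toFinset
    (by simp) (by simpa using ha)
  refine ⟨L', tourLengths_anti hP''S hL', hle.trans_eq ?_⟩
  rw [← hm, Set.ncard_eq_toFinset_card S hS]
  ring
end

section
/- Let P be a convex polytope in R^d, n a nonzero vector, and v a vertex of P that does not maximize the linear functional x ↦ ⟨x, n⟩ over P. Then there exists a vertex w of P adjacent to v (i.e., the segment [v,w] is an edge, a 1-dimensional face, of P) with ⟨w, n⟩ > ⟨v, n⟩. -/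
/-!
Let `S` be the finite set of vertices of `P`. Pick a functional `c` exposing `v` which is generic
in the sense that the improving vertices `x` (those with `⟪x - v, n⟫ > 0`) have pairwise distinct
ratios `⟪v - x, c⟫ / ⟪x - v, n⟫`. Such `c` exist because the bad ones lie on finitely many
hyperplanes, and these are proper since no two distinct vertices lie on a common ray from `v`.
Now tilt `c` towards `n`: for `u = c + t n`, as `t` grows, the improving vertex `w` with minimal
ratio is the first to reach the level of `v`, and it does so alone. At that moment `v` and `w` are
the only vertices maximizing `u`, so the face of `P` exposed by `u` is the segment `[v, w]`.
-/

open scoped RealInnerProductSpace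

open Set

theorem Finset.exists_forall_mul_lt_mul_of_ratio_injOn {α : Type*} {B : Finset α}
    (hB : B.Nonempty) {f g : α → ℝ} (hg : ∀ x ∈ B, 0 < g x)
    (hinj : ∀ x ∈ B, ∀ y ∈ B, f x * g y = f y * g x → x = y) :
    ∃ w ∈ B, ∀ x ∈ B, x ≠ w → f w * g x < f x * g w := by
  obtain ⟨w, hw, hmin⟩ := B.exists_min_image (fun x => f x / g x) hB
  refine ⟨w, hw, fun x hx hxw => ?_⟩
  have hle : f w * g x ≤ f x * g w := (div_le_div_iff₀ (hg w hw) (hg x hx)).mp (hmin x hx)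
  exact hle.lt_of_ne fun h => hxw (hinj x hx w hw h.symm)

theorem setOf_forall_le_eq_pair {α β : Type*} [LinearOrder β] {s : Set α} {φ : α → β} {v w : α}
    (hv : v ∈ s) (hw : w ∈ s) (hwv : φ w = φ v) (hlt : ∀ x ∈ s, x ≠ v → x ≠ w → φ x < φ v) :
    {x ∈ s | ∀ y ∈ s, φ y ≤ φ x} = {v, w} := by
  have hle : ∀ y ∈ s, φ y ≤ φ v := fun y hy => by
    by_cases hyv : y = v
    · rw [hyv]
    by_cases hyw : y = w
    · rw [hyw, hwv]
    exact (hlt y hy hyv hyw).le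
  ext x
  refine ⟨fun ⟨hx, hmax⟩ => ?_, ?_⟩
  · by_contra hxvw
    simp only [mem_insert_iff, mem_singleton_iff, not_or] at hxvw
    exact (hlt x hx hxvw.1 hxvw.2).not_ge (hmax v hv)
  · rintro (rfl | rfl)
    exacts [⟨hv, hle⟩, ⟨hw, hwv ▸ hle⟩]

theorem eq_of_smul_sub_eq_smul_sub_of_mem_extremePoints {E : Type*} [AddCommGroup E]
    [Module ℝ E] {A : Set E} {v x y : E} (hv : v ∈ A) (hx : x ∈ A.extremePoints ℝ)
    (hy : y ∈ A.extremePoints ℝ) {a b : ℝ} (ha : 0 < a) (hb : 0 < b)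
    (h : a • (v - x) = b • (v - y)) : x = y := by
  wlog hba : b ≤ a generalizing a b x y
  · exact (this hy hx hb ha h.symm (le_of_not_ge hba)).symm
  have hx' : x = (1 - b / a) • v + (b / a) • y := by
    have : v - x = (b / a) • (v - y) := by
      rw [div_eq_inv_mul, mul_smul, ← h, smul_smul, inv_mul_cancel₀ ha.ne', one_smul]
    linear_combination (norm := module) -this
  rcases (div_le_one ha).mpr hba |>.lt_or_eq with hlt | heq
  · have hseg : x ∈ openSegment ℝ v y :=
      ⟨1 - b / a, b / a, sub_pos.mpr hlt, div_pos hb ha, by ring, hx'.symm⟩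
    exact ((mem_extremePoints.mp hx).2 v hv y (extremePoints_subset hy) hseg).2.symm
  · rw [hx', heq, sub_self, zero_smul, one_smul, zero_add]

section InnerProductSpace

variable {E : Type*} [NormedAddCommGroup E] [InnerProductSpace ℝ E]

theorem inner_le_of_mem_convexHull {s : Set E} {u x : E} {M : ℝ} (hs : ∀ y ∈ s, ⟪y, u⟫ ≤ M)
    (hx : x ∈ convexHull ℝ s) : ⟪x, u⟫ ≤ M :=
  convexHull_min hs (convex_halfSpace_le
    ⟨fun y z => inner_add_left y z u, fun r y => real_inner_smul_left y u r⟩ M) hx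

theorem isExposed_setOf_forall_inner_le (A : Set E) (u : E) :
    IsExposed ℝ A {x ∈ A | ∀ y ∈ A, ⟪y, u⟫ ≤ ⟪x, u⟫} :=
  fun _ => ⟨innerSL ℝ u, by simp only [innerSL_apply_apply, real_inner_comm u]⟩

theorem Set.Finite.convexHull_extremePoints_convexHull_s18 {s : Set E} (hs : s.Finite) :
    convexHull ℝ ((convexHull ℝ s).extremePoints ℝ) = convexHull ℝ s := by
  refine (convexHull_min extremePoints_subset (convex_convexHull ℝ s)).antisymm ?_
  have hcl : IsClosed (convexHull ℝ ((convexHull ℝ s).extremePoints ℝ)) :=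
    (hs.subset extremePoints_convexHull_subset).isClosed_convexHull ℝ
  rw [← hcl.closure_eq, closure_convexHull_extremePoints (hs.isCompact_convexHull ℝ)
    (convex_convexHull ℝ s)]

theorem Set.Finite.setOf_forall_inner_le_convexHull {s : Set E} (hs : s.Finite) (u : E) :
    {x ∈ convexHull ℝ s | ∀ y ∈ convexHull ℝ s, ⟪y, u⟫ ≤ ⟪x, u⟫} =
      convexHull ℝ {x ∈ s | ∀ y ∈ s, ⟪y, u⟫ ≤ ⟪x, u⟫} := by
  set F := {x ∈ convexHull ℝ s | ∀ y ∈ convexHull ℝ s, ⟪y, u⟫ ≤ ⟪x, u⟫}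
  have hF : IsExposed ℝ (convexHull ℝ s) F := isExposed_setOf_forall_inner_le _ u
  have hFconv : Convex ℝ F := hF.convex (convex_convexHull ℝ s)
  refine subset_antisymm ?_ (convexHull_min ?_ hFconv)
  · have hext : F.extremePoints ℝ ⊆ {x ∈ s | ∀ y ∈ s, ⟪y, u⟫ ≤ ⟪x, u⟫} := fun x hx =>
      have hxF : x ∈ F := extremePoints_subset hx
      ⟨extremePoints_convexHull_subset (hF.isExtreme.extremePoints_subset_extremePoints hx),
        fun y hy => hxF.2 y (subset_convexHull ℝ s hy)⟩
    calc F = closure (convexHull ℝ (F.extremePoints ℝ)) :=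
          (closure_convexHull_extremePoints (hF.isCompact (hs.isCompact_convexHull ℝ)) hFconv).symm
      _ ⊆ closure (convexHull ℝ {x ∈ s | ∀ y ∈ s, ⟪y, u⟫ ≤ ⟪x, u⟫}) :=
          closure_mono (convexHull_mono hext)
      _ = _ := (hs.subset fun x hx => hx.1).isClosed_convexHull ℝ |>.closure_eq
  · exact fun x hx => ⟨subset_convexHull ℝ s hx.1, fun y hy => inner_le_of_mem_convexHull hx.2 hy⟩

theorem dense_setOf_inner_ne_zero {z : E} (hz : z ≠ 0) : Dense {c : E | ⟪z, c⟫ ≠ 0} := by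
  have : {c : E | ⟪z, c⟫ ≠ 0} = ((ℝ ∙ z)ᗮ : Set E)ᶜ := by
    ext c; simp [Submodule.mem_orthogonal_singleton_iff_inner_right]
  rw [this, ← interior_eq_empty_iff_dense_compl, ← not_nonempty_iff_eq_empty]
  intro hint
  have hzz : z ∈ (ℝ ∙ z)ᗮ := by
    rw [(ℝ ∙ z)ᗮ.eq_top_of_nonempty_interior' hint]; trivial
  exact hz (inner_self_eq_zero.mp (Submodule.mem_orthogonal_singleton_iff_inner_right.mp hzz))

theorem exists_inner_edge_of_generic {s : Set E} (hs : s.Finite) {v n c : E} (hv : v ∈ s)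
    (hc : ∀ x ∈ s, x ≠ v → ⟪x, c⟫ < ⟪v, c⟫)
    (hgen : ∀ x ∈ s, ∀ y ∈ s, ⟪v, n⟫ < ⟪x, n⟫ → ⟪v, n⟫ < ⟪y, n⟫ →
      ⟪v - x, c⟫ * ⟪y - v, n⟫ = ⟪v - y, c⟫ * ⟪x - v, n⟫ → x = y)
    (himp : ∃ x ∈ s, ⟪v, n⟫ < ⟪x, n⟫) :
    ∃ w ∈ s, ⟪v, n⟫ < ⟪w, n⟫ ∧ ∃ u : E, {x ∈ s | ∀ y ∈ s, ⟪y, u⟫ ≤ ⟪x, u⟫} = {v, w} := by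
  set B := (hs.subset (sep_subset s fun x => ⟪v, n⟫ < ⟪x, n⟫)).toFinset
  have hB : ∀ {x}, x ∈ B ↔ x ∈ s ∧ ⟪v, n⟫ < ⟪x, n⟫ := by simp [B]
  obtain ⟨w, hwB, hmin⟩ := Finset.exists_forall_mul_lt_mul_of_ratio_injOn
    (f := fun x => ⟪v - x, c⟫) (g := fun x => ⟪x - v, n⟫) (B := B)
    (by obtain ⟨x, hx⟩ := himp; exact ⟨x, hB.mpr hx⟩)
    (fun x hx => by rw [inner_sub_left, sub_pos]; exact (hB.mp hx).2)
    (fun x hx y hy => hgen x (hB.mp hx).1 y (hB.mp hy).1 (hB.mp hx).2 (hB.mp hy).2)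
  obtain ⟨hws, hwn⟩ := hB.mp hwB
  -- `c + t • n` for the minimal ratio `t`, multiplied by `⟪w - v, n⟫` to clear the denominator
  refine ⟨w, hws, hwn, ⟪w - v, n⟫ • c + ⟪v - w, c⟫ • n, ?_⟩
  have key : ∀ x, ⟪x, ⟪w - v, n⟫ • c + ⟪v - w, c⟫ • n⟫ - ⟪v, ⟪w - v, n⟫ • c + ⟪v - w, c⟫ • n⟫ =
      ⟪v - w, c⟫ * ⟪x - v, n⟫ - ⟪v - x, c⟫ * ⟪w - v, n⟫ := fun x => by
    simp only [inner_add_right, real_inner_smul_right, inner_sub_left]; ring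
  refine setOf_forall_le_eq_pair hv hws (by linarith [key w]) fun x hx hxv hxw => ?_
  rw [← sub_neg, key]
  by_cases hxn : ⟪v, n⟫ < ⟪x, n⟫
  · exact sub_neg.mpr (hmin x (hB.mpr ⟨hx, hxn⟩) hxw)
  · have hgx : ⟪x - v, n⟫ ≤ 0 := by rw [inner_sub_left]; linarith
    have hfx : 0 < ⟪v - x, c⟫ := by rw [inner_sub_left, sub_pos]; exact hc x hx hxv
    have hfw : 0 < ⟪v - w, c⟫ := by
      rw [inner_sub_left, sub_pos]; exact hc w hws (ne_of_apply_ne (⟪·, n⟫) hwn.ne')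
    have hgw : 0 < ⟪w - v, n⟫ := by rw [inner_sub_left, sub_pos]; exact hwn
    nlinarith [mul_nonpos_of_nonneg_of_nonpos hfw.le hgx, mul_pos hfx hgw]

variable [CompleteSpace E]

theorem Set.Finite.exists_inner_lt_of_mem_extremePoints_convexHull {s : Set E} (hs : s.Finite)
    {v : E} (hv : v ∈ (convexHull ℝ s).extremePoints ℝ) :
    ∃ c : E, ∀ x ∈ s, x ≠ v → ⟪x, c⟫ < ⟪v, c⟫ := by
  have hv' : v ∉ convexHull ℝ (s \ {v}) := fun h =>
    ((convex_convexHull ℝ s).mem_extremePoints_iff_mem_sdiff_convexHull_sdiff.mp hv).2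
      (convexHull_mono (sdiff_subset_sdiff_left (subset_convexHull ℝ s)) h)
  obtain ⟨f, M, hlt, hMv⟩ := geometric_hahn_banach_closed_point (convex_convexHull ℝ _)
    (hs.sdiff.isClosed_convexHull ℝ) hv'
  refine ⟨(InnerProductSpace.toDual ℝ E).symm f, fun x hx hxv => ?_⟩
  rw [real_inner_comm, real_inner_comm _ v, InnerProductSpace.toDual_symm_apply,
    InnerProductSpace.toDual_symm_apply]
  exact (hlt x (subset_convexHull ℝ _ ⟨hx, hxv⟩)).trans hMv

theorem IsOpen.exists_mem_forall_inner_ne_zero {U : Set E} (hU : IsOpen U) (hne : U.Nonempty)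
    {Z : Set E} (hZ : Z.Finite) (h0 : (0 : E) ∉ Z) : ∃ c ∈ U, ∀ z ∈ Z, ⟪z, c⟫ ≠ 0 := by
  have hdense : Dense (⋂ z ∈ Z, {c : E | ⟪z, c⟫ ≠ 0}) :=
    dense_biInter_of_isOpen (fun z _ => isOpen_ne_fun (by fun_prop) (by fun_prop)) hZ.countable
      fun z hz => dense_setOf_inner_ne_zero (ne_of_mem_of_not_mem hz h0)
  obtain ⟨c, hcU, hc⟩ := hdense.inter_open_nonempty U hU hne
  exact ⟨c, hcU, mem_iInter₂.mp hc⟩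

theorem Set.Finite.exists_generic_exposing {s : Set E} (hs : s.Finite)
    (hsext : s ⊆ (convexHull ℝ s).extremePoints ℝ) {v : E} (hv : v ∈ s) (n : E) :
    ∃ c : E, (∀ x ∈ s, x ≠ v → ⟪x, c⟫ < ⟪v, c⟫) ∧
      ∀ x ∈ s, ∀ y ∈ s, ⟪v, n⟫ < ⟪x, n⟫ → ⟪v, n⟫ < ⟪y, n⟫ →
        ⟪v - x, c⟫ * ⟪y - v, n⟫ = ⟪v - y, c⟫ * ⟪x - v, n⟫ → x = y := by
  set U := ⋂ x ∈ s \ {v}, {c : E | ⟪x, c⟫ < ⟪v, c⟫}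
  have hU : IsOpen U := hs.sdiff.isOpen_biInter fun x _ => isOpen_lt (by fun_prop) (by fun_prop)
  have hUne : U.Nonempty := by
    obtain ⟨c, hc⟩ := hs.exists_inner_lt_of_mem_extremePoints_convexHull (hsext hv)
    exact ⟨c, mem_iInter₂.mpr fun x hx => hc x hx.1 hx.2⟩
  set B := {x ∈ s | ⟪v, n⟫ < ⟪x, n⟫}
  set z : E × E → E := fun p => ⟪p.2 - v, n⟫ • (v - p.1) - ⟪p.1 - v, n⟫ • (v - p.2)
  have hZ : (z '' {p ∈ B ×ˢ B | p.1 ≠ p.2}).Finite :=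
    (((hs.subset (sep_subset _ _)).prod (hs.subset (sep_subset _ _))).subset
      (sep_subset _ _)).image z
  have h0 : (0 : E) ∉ z '' {p ∈ B ×ˢ B | p.1 ≠ p.2} := by
    rintro ⟨⟨x, y⟩, ⟨⟨hx, hy⟩, hxy⟩, hz⟩
    refine hxy (eq_of_smul_sub_eq_smul_sub_of_mem_extremePoints (subset_convexHull ℝ s hv)
      (hsext hx.1) (hsext hy.1) ?_ ?_ (sub_eq_zero.mp hz))
    · rw [inner_sub_left, sub_pos]; exact hy.2
    · rw [inner_sub_left, sub_pos]; exact hx.2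
  obtain ⟨c, hcU, hcz⟩ := hU.exists_mem_forall_inner_ne_zero hUne hZ h0
  refine ⟨c, fun x hx hxv => mem_iInter₂.mp hcU x ⟨hx, hxv⟩, fun x hx y hy hxn hyn hxy => ?_⟩
  by_contra hne
  refine hcz _ ⟨(x, y), ⟨⟨⟨hx, hxn⟩, ⟨hy, hyn⟩⟩, hne⟩, rfl⟩ ?_
  simp only [z, inner_sub_left, real_inner_smul_left] at hxy ⊢
  linarith

theorem Set.Finite.exists_inner_edge {s : Set E} (hs : s.Finite)
    (hsext : s ⊆ (convexHull ℝ s).extremePoints ℝ) {v n : E} (hv : v ∈ s)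
    (himp : ∃ x ∈ s, ⟪v, n⟫ < ⟪x, n⟫) :
    ∃ w ∈ s, ⟪v, n⟫ < ⟪w, n⟫ ∧ ∃ u : E,
      {x ∈ convexHull ℝ s | ∀ y ∈ convexHull ℝ s, ⟪y, u⟫ ≤ ⟪x, u⟫} = segment ℝ v w := by
  obtain ⟨c, hc, hgen⟩ := hs.exists_generic_exposing hsext hv n
  obtain ⟨w, hws, hwn, u, hu⟩ := exists_inner_edge_of_generic hs hv hc hgen himp
  exact ⟨w, hws, hwn, u, by rw [hs.setOf_forall_inner_le_convexHull, hu, convexHull_pair]⟩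

end InnerProductSpace

theorem stmt18_general {d : ℕ} (V : Finset (EuclideanSpace ℝ (Fin d)))
    (P : Set (EuclideanSpace ℝ (Fin d)))
    (hP : P = convexHull ℝ (V : Set (EuclideanSpace ℝ (Fin d))))
    (n : EuclideanSpace ℝ (Fin d))
    (v : EuclideanSpace ℝ (Fin d)) (hv : v ∈ P.extremePoints ℝ)
    (hnotmax : ¬ ∀ x ∈ P, ⟪x, n⟫ ≤ ⟪v, n⟫) :
    ∃ w ∈ P.extremePoints ℝ, w ≠ v ∧ ⟪v, n⟫ < ⟪w, n⟫ ∧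
      ∃ u : EuclideanSpace ℝ (Fin d),
        {x ∈ P | ∀ y ∈ P, ⟪y, u⟫ ≤ ⟪x, u⟫} = segment ℝ v w := by
  have hfin : (P.extremePoints ℝ).Finite :=
    V.finite_toSet.subset (hP ▸ extremePoints_convexHull_subset)
  have hconv : convexHull ℝ (P.extremePoints ℝ) = P :=
    hP ▸ V.finite_toSet.convexHull_extremePoints_convexHull_s18
  have himp : ∃ x ∈ P.extremePoints ℝ, ⟪v, n⟫ < ⟪x, n⟫ := by
    by_contra! h
    exact hnotmax fun x hx => inner_le_of_mem_convexHull h (by rwa [hconv])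
  obtain ⟨w, hw, hwn, u, hu⟩ := hfin.exists_inner_edge (hconv.symm ▸ subset_rfl) hv himp
  exact ⟨w, hw, ne_of_apply_ne (⟪·, n⟫) hwn.ne', hwn, u, hconv ▸ hu⟩

/-- The local-improvement fact underlying the simplex method: if a vertex `v` of a
convex polytope `P` does not maximize the linear functional `x ↦ ⟪x, n⟫` over `P`,
then there is a vertex `w` adjacent to `v` (i.e. `[v, w]` is an edge of `P`, a face
that is the set of maximizers of some linear functional) with `⟪w, n⟫ > ⟪v, n⟫`. -/
theorem stmt18 {d : ℕ} (V : Finset (EuclideanSpace ℝ (Fin d)))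
    (P : Set (EuclideanSpace ℝ (Fin d)))
    (hP : P = convexHull ℝ (V : Set (EuclideanSpace ℝ (Fin d))))
    (n : EuclideanSpace ℝ (Fin d)) (hn : n ≠ 0)
    (v : EuclideanSpace ℝ (Fin d)) (hv : v ∈ P.extremePoints ℝ)
    (hnotmax : ¬ ∀ x ∈ P, ⟪x, n⟫ ≤ ⟪v, n⟫) :
    ∃ w ∈ P.extremePoints ℝ, w ≠ v ∧ ⟪v, n⟫ < ⟪w, n⟫ ∧
      ∃ u : EuclideanSpace ℝ (Fin d),
        {x ∈ P | ∀ y ∈ P, ⟪y, u⟫ ≤ ⟪x, u⟫} = segment ℝ v w :=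
  stmt18_general V P hP n v hv hnotmax
end
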